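/- arXiv:1203.5210 — 4 statements merged into one kernel-verified Lean document; each statement's English description precedes it below -/
import Mathlib

section
/- Let k be a field, n a positive integer, and q : GL_n(k) → PGL_n(k) the natural projection. If G is a subgroup of GL_n(k) such that PSL_n(k) ≤ q(G), then SL_n(k) ≤ G. -/
/-!
The hypothesis says that every `s ∈ SL_n(k)` is `g * z` with `g ∈ G` and `z` scalar, and `SL_n(k)`
is generated by transvections, so it suffices to put every transvection into `G`. Central factors
cancel in commutators, so all commutators of `SL_n(k)` lie in `G`; if some `a ∈ kˣ` has `a² ≠ 1`,
every transvection is such a commutator, `⁅diag(a, a⁻¹), t(b)⁆ = t((a² - 1) b)`. Otherwise every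
scalar `z` has `z² = 1`, so `G` contains all squares `s² = g²` of `SL_n(k)`: this contains every
transvection `t(c) = t(c/2)²` when `2 ≠ 0`, while for `2 = 0` the only scalar is `1` and `s = g`.
-/

open scoped commutatorElement

namespace Subgroup

variable {Γ : Type*} [Group Γ] {G : Subgroup Γ}

lemma commutatorElement_mul_mem_center {g₁ g₂ z₁ z₂ : Γ} (h₁ : z₁ ∈ center Γ)
    (h₂ : z₂ ∈ center Γ) : ⁅g₁ * z₁, g₂ * z₂⁆ = ⁅g₁, g₂⁆ := by
  have c₁ : Commute z₁ (g₂ * z₂) := (mem_center_iff.mp h₁ _).symm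
  have c₂ : Commute g₁ z₂ := mem_center_iff.mp h₂ _
  rw [commutatorElement_mul_left_eq_conj_mul, c₁.commutator_eq, mul_one, mul_inv_cancel, one_mul,
    commutatorElement_mul_right_eq_mul_conj, c₂.commutator_eq, mul_one, mul_inv_cancel_right]

lemma commutatorElement_mem_of_mem_sup_center {x y : Γ} (hx : x ∈ G ⊔ center Γ)
    (hy : y ∈ G ⊔ center Γ) : ⁅x, y⁆ ∈ G := by
  obtain ⟨g₁, hg₁, z₁, hz₁, rfl⟩ := mem_sup_of_normal_right.mp hx
  obtain ⟨g₂, hg₂, z₂, hz₂, rfl⟩ := mem_sup_of_normal_right.mp hy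
  rw [commutatorElement_mul_mem_center hz₁ hz₂]
  exact G.commutator_le_self (commutator_mem_commutator hg₁ hg₂)

lemma pow_mem_of_mem_sup_center {m : ℕ} (hZ : ∀ z ∈ center Γ, z ^ m = 1) {x : Γ}
    (hx : x ∈ G ⊔ center Γ) : x ^ m ∈ G := by
  obtain ⟨g, hg, z, hz, rfl⟩ := mem_sup_of_normal_right.mp hx
  rw [Commute.mul_pow (mem_center_iff.mp hz g), hZ z hz, mul_one]
  exact G.pow_mem hg m

end Subgroup

lemma Matrix.GeneralLinearGroup.pow_eq_one_of_mem_center {ι R : Type*} [Fintype ι]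
    [DecidableEq ι] [CommRing R] {m : ℕ} (hR : ∀ a : Rˣ, a ^ m = 1) {z : GL ι R}
    (hz : z ∈ Subgroup.center (GL ι R)) : z ^ m = 1 := by
  rw [center_eq_range_scalar] at hz
  obtain ⟨a, rfl⟩ := hz
  rw [← map_pow, hR, map_one]

open Matrix Subgroup

namespace Matrix.SpecialLinearGroup

variable {ι F : Type*} [Fintype ι] [DecidableEq ι] [Field F]

lemma diag2n_eq_transvection_mul {i j : ι} (hij : i ≠ j) {a : F} (ha : a ≠ 0) :
    diag2n hij a ha = transvection hij a * transvection hij.symm (-a⁻¹) * transvection hij a *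
      transvection hij (-1) * transvection hij.symm 1 * transvection hij (-1) := by
  apply Subtype.ext
  simp only [coe_mul, diag2n_coe, transvection_coe, mul_add, add_mul, mul_one, one_mul,
    single_mul_single_same, single_mul_single_of_ne _ _ _ _ hij,
    single_mul_single_of_ne _ _ _ _ hij.symm, add_zero]
  ext p q
  simp only [diagonal_apply, add_apply, one_apply, single_apply]
  rcases eq_or_ne p i with rfl | hpi <;> rcases eq_or_ne q p with rfl | hqp <;>
    simp [*, hij.symm] <;> grind

theorem closure_range_transvection :
    closure (Set.range fun t : TransvectionStruct ι F ↦ t.toSpecialLinearGroup) = ⊤ := by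
  refine eq_top_iff.mpr fun M _ ↦ ?_
  cases subsingleton_or_nontrivial ι with
  | inl _ => exact Subsingleton.elim M 1 ▸ one_mem _
  | inr _ =>
    have htransvection {i j : ι} (hij : i ≠ j) (c : F) : transvection hij c ∈
        closure (Set.range fun t : TransvectionStruct ι F ↦ t.toSpecialLinearGroup) :=
      subset_closure ⟨⟨i, j, hij, c⟩, rfl⟩
    refine diagonal_transvection_induction' _ M (fun i j hij c hc ↦ ?_)
      (fun i j hij c ↦ htransvection hij c) (fun _ _ ↦ mul_mem)
    rw [diag2n_eq_transvection_mul]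
    refine mul_mem (mul_mem (mul_mem (mul_mem (mul_mem ?_ ?_) ?_) ?_) ?_) ?_ <;>
      exact htransvection _ _

lemma diag2n_mul_transvection {i j : ι} (hij : i ≠ j) {a : F} (ha : a ≠ 0) (b : F) :
    diag2n hij a ha * transvection hij b = transvection hij (a ^ 2 * b) * diag2n hij a ha := by
  ext p q
  simp only [coe_mul, diag2n_coe, transvection_coe, diagonal_mul, mul_diagonal, add_apply,
    one_apply, single_apply]
  by_cases hp : p = i <;> by_cases hq : q = j <;> simp [hp, hq, hij, hij.symm] <;> grind

lemma commutatorElement_diag2n_transvection {i j : ι} (hij : i ≠ j) {a : F} (ha : a ≠ 0)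
    (b : F) : ⁅diag2n hij a ha, transvection hij b⁆ = transvection hij ((a ^ 2 - 1) * b) := by
  rw [commutatorElement_def, diag2n_mul_transvection, mul_inv_cancel_right, transvection_inv,
    ← transvection_add, sub_one_mul, sub_eq_add_neg]

variable {G : Subgroup (GL ι F)}

lemma toGL_transvection_mem_of_sq_ne_one (hS : toGL.range ≤ G ⊔ center (GL ι F)) {a : Fˣ}
    (ha : a ^ 2 ≠ 1) {i j : ι} (hij : i ≠ j) (c : F) : toGL (transvection hij c) ∈ G := by
  have ha' : (a : F) ^ 2 - 1 ≠ 0 := sub_ne_zero.mpr fun h ↦ ha (Units.ext (by simpa using h))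
  have hc : transvection hij c =
      ⁅diag2n hij (a : F) a.ne_zero, transvection hij (c / ((a : F) ^ 2 - 1))⁆ := by
    rw [commutatorElement_diag2n_transvection, mul_div_cancel₀ _ ha']
  rw [hc, map_commutatorElement]
  exact commutatorElement_mem_of_mem_sup_center (hS ⟨_, rfl⟩) (hS ⟨_, rfl⟩)

lemma toGL_transvection_mem_of_forall_sq_eq_one (hS : toGL.range ≤ G ⊔ center (GL ι F))
    (hF : ∀ a : Fˣ, a ^ 2 = 1) {i j : ι} (hij : i ≠ j) (c : F) :
    toGL (transvection hij c) ∈ G := by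
  by_cases h2 : (2 : F) = 0
  · have hF1 (a : Fˣ) : a ^ 1 = 1 := by
      have h : (a : F) ^ 2 = 1 := by simpa using congrArg Units.val (hF a)
      have : ((a : F) - 1) ^ 2 = 0 := by linear_combination h + (1 - (a : F)) * h2
      exact Units.ext (by simpa [sub_eq_zero] using this)
    simpa using pow_mem_of_mem_sup_center
      (fun z hz ↦ GeneralLinearGroup.pow_eq_one_of_mem_center hF1 hz)
      (hS ⟨transvection hij c, rfl⟩)
  · have hc : transvection hij c = transvection hij (c / 2) ^ 2 := by
      rw [sq, ← transvection_add, ← two_mul, mul_div_cancel₀ _ h2]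
    rw [hc, map_pow]
    exact pow_mem_of_mem_sup_center
      (fun z hz ↦ GeneralLinearGroup.pow_eq_one_of_mem_center hF hz) (hS ⟨_, rfl⟩)

theorem range_toGL_le_of_le_sup_center (hS : toGL.range ≤ G ⊔ center (GL ι F)) :
    toGL.range ≤ G := by
  rw [MonoidHom.range_eq_map, ← closure_range_transvection, MonoidHom.map_closure, closure_le]
  rintro _ ⟨_, ⟨⟨i, j, hij, c⟩, rfl⟩, rfl⟩
  by_cases hF : ∀ a : Fˣ, a ^ 2 = 1
  · exact toGL_transvection_mem_of_forall_sq_eq_one hS hF hij c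
  · obtain ⟨a, ha⟩ := not_forall.mp hF
    exact toGL_transvection_mem_of_sq_ne_one hS ha hij c

end Matrix.SpecialLinearGroup

theorem stmt_0_general {k : Type*} [Field k] {n : ℕ}
    (G : Subgroup (GL (Fin n) k))
    (h : Subgroup.map (QuotientGroup.mk' (Subgroup.center (GL (Fin n) k)))
        (Matrix.SpecialLinearGroup.toGL (n := Fin n) (R := k)).range ≤
      Subgroup.map (QuotientGroup.mk' (Subgroup.center (GL (Fin n) k))) G) :
    (Matrix.SpecialLinearGroup.toGL (n := Fin n) (R := k)).range ≤ G := by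
  rw [map_le_iff_le_comap, comap_map_eq, QuotientGroup.ker_mk'] at h
  exact SpecialLinearGroup.range_toGL_le_of_le_sup_center h

/-- Let `k` be a field, `n` a positive integer, and
`q : GL_n(k) → PGL_n(k)` the natural projection (quotient by the center).
If `G ≤ GL_n(k)` satisfies `PSL_n(k) ≤ q(G)` (where `PSL_n(k)` is the image of
`SL_n(k)` in `PGL_n(k)`), then `SL_n(k) ≤ G`. -/
theorem stmt_0 {k : Type*} [Field k] {n : ℕ} (hn : 0 < n)
    (G : Subgroup (GL (Fin n) k))
    (h : Subgroup.map (QuotientGroup.mk' (Subgroup.center (GL (Fin n) k)))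
        (Matrix.SpecialLinearGroup.toGL (n := Fin n) (R := k)).range ≤
      Subgroup.map (QuotientGroup.mk' (Subgroup.center (GL (Fin n) k))) G) :
    (Matrix.SpecialLinearGroup.toGL (n := Fin n) (R := k)).range ≤ G :=
  stmt_0_general G h
end

section
/- Let G be a group, k a field, N ≥ 2, and R₁, R₂ : G → GL_N(k) two representations whose restrictions to the commutator subgroup G' coincide, and such that R₁(G') = R₂(G') contains SL_N(k). Then there exists a group homomorphism η : G → k^× such that R₂(g) = η(g)·R₁(g) for all g ∈ G. -/
/-!
Write `D g = (R₁ g)⁻¹ * R₂ g`. Because `R₁` and `R₂` agree on the normal subgroup `G'`,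
conjugating by `g` shows that `D g` commutes with `R₁ h` for every `h ∈ G'`, hence with all of
`SL_N(k)`, in particular with every transvection; so `D g` is central in `GL_N(k)`, i.e. a
nonzero scalar. A central-valued `D` is automatically multiplicative, and `η` is `D` read in
`kˣ ≅ Z(GL_N(k))`.
-/

section RatioOfHoms

variable {G M : Type*} [Group G] [Group M]

theorem MonoidHom.commute_inv_mul_of_eqOn_normal {H : Subgroup G} [H.Normal]
    {R₁ R₂ : G →* M} (hres : ∀ h ∈ H, R₁ h = R₂ h) {h : G} (hh : h ∈ H) (g : G) :
    Commute (R₁ h) ((R₁ g)⁻¹ * R₂ g) := by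
  have hconj : g * h * g⁻¹ ∈ H := Subgroup.Normal.conj_mem inferInstance h hh g
  have key : R₂ g * R₁ h = R₁ g * R₁ h * (R₁ g)⁻¹ * R₂ g :=
    calc R₂ g * R₁ h = R₂ (g * h * g⁻¹) * R₂ g := by
          rw [hres h hh, ← map_mul, ← map_mul]; congr 1; group
      _ = R₁ g * R₁ h * (R₁ g)⁻¹ * R₂ g := by rw [← hres _ hconj, map_mul, map_mul, map_inv]
  calc R₁ h * ((R₁ g)⁻¹ * R₂ g) = (R₁ g)⁻¹ * (R₁ g * R₁ h * (R₁ g)⁻¹ * R₂ g) := by group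
    _ = (R₁ g)⁻¹ * R₂ g * R₁ h := by rw [← key]; group

def MonoidHom.centralRatio (R₁ R₂ : G →* M)
    (hcent : ∀ g, (R₁ g)⁻¹ * R₂ g ∈ Subgroup.center M) : G →* Subgroup.center M where
  toFun g := ⟨(R₁ g)⁻¹ * R₂ g, hcent g⟩
  map_one' := by ext; simp
  map_mul' g h := by
    ext
    have hc := Subgroup.mem_center_iff.mp (hcent g) ((R₁ h)⁻¹)
    simp only [map_mul, _root_.mul_inv_rev, Subgroup.coe_mul]
    calc (R₁ h)⁻¹ * (R₁ g)⁻¹ * (R₂ g * R₂ h)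
        = (R₁ h)⁻¹ * ((R₁ g)⁻¹ * R₂ g) * R₂ h := by group
      _ = (R₁ g)⁻¹ * R₂ g * ((R₁ h)⁻¹ * R₂ h) := by rw [hc]; group

theorem MonoidHom.centralRatio_spec (R₁ R₂ : G →* M)
    (hcent : ∀ g, (R₁ g)⁻¹ * R₂ g ∈ Subgroup.center M) (g : G) :
    R₂ g = R₁ g * centralRatio R₁ R₂ hcent g := by
  simp [centralRatio]

end RatioOfHoms

namespace Matrix.GeneralLinearGroup

variable {n k : Type*} [Fintype n] [DecidableEq n] [Field k]

theorem mem_center_of_commute_toGL {D : GL n k}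
    (hD : ∀ S : SpecialLinearGroup n k, Commute (SpecialLinearGroup.toGL S) D) :
    D ∈ Subgroup.center (GL n k) :=
  mem_center_iff_val_mem_range_scalar.mpr <| mem_range_scalar_of_commute_transvectionStruct
    fun t ↦ congrArg Units.val (hD ⟨t.toMatrix, t.det⟩)

noncomputable def centerEquivUnits [Nonempty n] : Subgroup.center (GL n k) ≃* kˣ :=
  (MulEquiv.subgroupCongr center_eq_range_scalar).trans
    (MonoidHom.ofInjective (f := scalar n) fun a b hab ↦ by
      simpa [Units.ext_iff, coe_scalar] using hab).symm

theorem coe_centerEquivUnits_symm [Nonempty n] (c : kˣ) :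
    (((centerEquivUnits.symm c : Subgroup.center (GL n k)) : GL n k) : Matrix n n k) =
      Matrix.scalar n (c : k) :=
  rfl

theorem val_eq_centerEquivUnits_smul_one [Nonempty n] (z : Subgroup.center (GL n k)) :
    ((z : GL n k) : Matrix n n k) = (centerEquivUnits z : k) • 1 := by
  conv_lhs => rw [← centerEquivUnits.symm_apply_apply z]
  rw [coe_centerEquivUnits_symm, Matrix.smul_one_eq_diagonal, Matrix.scalar_apply]

end Matrix.GeneralLinearGroup

/-- Let `G` be a group, `k` a field, `N ≥ 2`, and `R₁, R₂ : G → GL_N(k)`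
two representations whose restrictions to the commutator subgroup `G'` coincide, and such
that `R₁(G') = R₂(G')` contains `SL_N(k)`. Then there exists a homomorphism `η : G → kˣ`
with `R₂(g) = η(g) • R₁(g)` for all `g`. -/
theorem stmt_3 {G : Type*} [Group G] {k : Type*} [Field k] {N : ℕ} (hN : 2 ≤ N)
    (R₁ R₂ : G →* GL (Fin N) k)
    (hres : ∀ g ∈ commutator G, R₁ g = R₂ g)
    (hSL : (Matrix.SpecialLinearGroup.toGL (n := Fin N) (R := k)).range ≤
      (commutator G).map R₁) :
    ∃ η : G →* kˣ, ∀ g : G,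
      ((R₂ g : Matrix (Fin N) (Fin N) k)) = (η g : k) • ((R₁ g : Matrix (Fin N) (Fin N) k)) := by
  have : Nonempty (Fin N) := ⟨⟨0, by omega⟩⟩
  have hcent (g : G) : (R₁ g)⁻¹ * R₂ g ∈ Subgroup.center (GL (Fin N) k) :=
    Matrix.GeneralLinearGroup.mem_center_of_commute_toGL fun S ↦ by
      obtain ⟨h, hh, hS⟩ := hSL ⟨S, rfl⟩
      rw [← hS]
      exact R₁.commute_inv_mul_of_eqOn_normal hres hh g
  refine ⟨Matrix.GeneralLinearGroup.centerEquivUnits.toMonoidHom.comp (R₁.centralRatio R₂ hcent),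
    fun g ↦ ?_⟩
  rw [R₁.centralRatio_spec R₂ hcent g, Units.val_mul,
    Matrix.GeneralLinearGroup.val_eq_centerEquivUnits_smul_one, Matrix.mul_smul, Matrix.mul_one]
  rfl
end

section
/- Let G be a group and ρ : G → GL_N(F_{q²}) an absolutely irreducible representation such that ε ∘ ρ* is isomorphic to ρ, where ρ* is the contragredient (dual) representation and ε is the order-2 field automorphism of F_{q²} over F_q, applied entrywise. Then there exists P ∈ GL_N(F_{q²}) such that P ρ(g) P⁻¹ ∈ GU_N(q) for all g ∈ G. -/
/-
Transporting the isomorphism `ε ∘ ρ* ≅ ρ` gives an invertible `Q` with `ρ(g)ᴴ Q ρ(g) = Q`, where `ᴴ`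
is the `ε`-conjugate transpose. Then `Qᴴ` is invariant too, so by Schur's lemma `Qᴴ = c Q`, and
`ε(c) c = 1`; by Hilbert 90 some multiple `J = μ Q` is hermitian. Over `F_{q²}` every
nondegenerate hermitian form is equivalent to the standard one: a vector of nonzero norm, rescaled
by the surjectivity of the norm onto `F_q`, splits off an orthogonal line. Hence `J = Pᴴ P`, and
`P ρ(g) P⁻¹` is unitary. Since `ε` is `x ↦ x ^ q`, the norm and Hilbert 90 statements reduce to
the cyclicity of `Fˣ`.
-/

theorem IsCyclic.exists_pow_eq_of_pow_eq_one {G : Type*} [CommGroup G] [IsCyclic G] [Finite G]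
    {d e : ℕ} (hde : Nat.card G = d * e) {x : G} (hx : x ^ d = 1) : ∃ y : G, y ^ e = x := by
  have he : e ≠ 0 := by rintro rfl; exact Nat.card_pos.ne' hde
  have hle : (powMonoidHom e : G →* G).range ≤ (powMonoidHom d).ker := by
    rintro _ ⟨y, rfl⟩
    simp [← pow_mul, mul_comm e d, ← hde, pow_card_eq_one']
  have hcard :
      Nat.card (powMonoidHom d : G →* G).ker ≤ Nat.card (powMonoidHom e : G →* G).range := by
    rw [IsCyclic.card_powMonoidHom_ker, IsCyclic.card_powMonoidHom_range, hde,
      Nat.gcd_mul_left_left, Nat.gcd_mul_right_left, Nat.mul_div_cancel _ (Nat.pos_of_ne_zero he)]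
  have hx' : x ∈ (powMonoidHom d : G →* G).ker := hx
  rw [← Subgroup.eq_of_le_of_card_ge hle hcard] at hx'
  exact hx'

-- `x` and `ε x` are the roots of `X² - (x + ε x) X + x ε x`, whose coefficients `φ` fixes.
theorem RingHom.eq_or_eq_of_forall_fixed {K : Type*} [Field K] (ε φ : K →+* K)
    (hε : Function.Involutive ε) (hfix : ∀ x, ε x = x → φ x = x) (x : K) :
    φ x = x ∨ φ x = ε x := by
  have hsum : φ (x + ε x) = x + ε x := hfix _ (by rw [map_add, hε x, add_comm])
  have hprod : φ (x * ε x) = x * ε x := hfix _ (by rw [map_mul, hε x, mul_comm])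
  have hroot : (φ x - x) * (φ x - ε x) = 0 := by
    have h := congrArg φ (show x * x - (x + ε x) * x + x * ε x = 0 by ring)
    rw [map_add, map_sub, map_mul, map_mul, hsum, hprod, map_zero] at h
    linear_combination h
  rcases mul_eq_zero.1 hroot with h | h
  · exact .inl (sub_eq_zero.1 h)
  · exact .inr (sub_eq_zero.1 h)

theorem RingHom.eq_of_eq_on_units_generator {F R : Type*} [Field F] [Fintype F] [Semiring R]
    {ζ : Fˣ} (hζ : ∀ x, x ∈ Subgroup.zpowers ζ) {f g : F →+* R} (h : f ζ = g ζ) : f = g := by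
  ext x
  obtain rfl | hx := eq_or_ne x 0
  · simp
  obtain ⟨k, hk⟩ := mem_powers_iff_mem_zpowers.2 (hζ (Units.mk0 x hx))
  rw [← Units.val_mk0 hx, ← hk, Units.val_pow_eq_pow_val, map_pow, map_pow, h]

section FiniteField

variable {F : Type*} [Field F] [Fintype F] {q : ℕ}

theorem exists_ringHom_eq_pow_of_card_eq_sq (hcard : Fintype.card F = q ^ 2) :
    ∃ φ : F →+* F, ∀ x, φ x = x ^ q := by
  obtain ⟨n, hp, hn⟩ := FiniteField.card F (ringChar F)
  have : Fact (ringChar F).Prime := ⟨hp⟩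
  obtain ⟨m, -, rfl⟩ := (Nat.dvd_prime_pow hp).1 ⟨q, by rw [← hn, hcard, sq]⟩
  exact ⟨iterateFrobenius F (ringChar F) m, fun _ => rfl⟩

theorem one_le_of_card_eq_sq (hcard : Fintype.card F = q ^ 2) : 1 ≤ q :=
  Nat.one_le_iff_ne_zero.2 (by rintro rfl; simp at hcard)

theorem card_units_eq_of_card_eq_sq (hcard : Fintype.card F = q ^ 2) :
    Nat.card Fˣ = (q - 1) * (q + 1) := by
  rw [Nat.card_units, Nat.card_eq_fintype_card, hcard, mul_comm, ← Nat.sq_sub_sq, one_pow]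

variable (hcard : Fintype.card F = q ^ 2) {ε : F ≃+* F} (hinv : Function.Involutive ε)
  (hne : ε ≠ RingEquiv.refl F) (hfix : ∀ x : F, ε x = x ↔ x ^ q = x)
include hcard hinv hne hfix

theorem RingEquiv.apply_eq_pow_of_card_eq_sq (x : F) : ε x = x ^ q := by
  obtain ⟨φ, hφ⟩ := exists_ringHom_eq_pow_of_card_eq_sq hcard
  obtain ⟨ζ, hζ⟩ := IsCyclic.exists_generator (α := Fˣ)
  have hfixφ : ∀ y, ε y = y → φ y = y := fun y hy => (hφ y).trans ((hfix y).1 hy)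
  rcases RingHom.eq_or_eq_of_forall_fixed (ε : F →+* F) φ hinv hfixφ ζ with h | h
  · refine absurd (RingEquiv.ext fun y => ?_) hne
    have hφid : φ = RingHom.id F := RingHom.eq_of_eq_on_units_generator hζ h
    exact (hfix y).2 (by rw [← hφ, hφid, RingHom.id_apply])
  · rw [← hφ, RingHom.eq_of_eq_on_units_generator hζ h]
    rfl

theorem RingEquiv.exists_apply_mul_self_eq_of_card_eq_sq (a : F) (ha : a ≠ 0) (hfa : ε a = a) :
    ∃ c, ε c * c = a := by
  have hq := one_le_of_card_eq_sq hcard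
  have haq : (Units.mk0 a ha) ^ (q - 1) = 1 := by
    refine Units.ext (mul_right_cancel₀ ha ?_)
    rw [Units.val_pow_eq_pow_val, Units.val_mk0, ← pow_succ, Nat.sub_add_cancel hq, Units.val_one,
      one_mul]
    exact (hfix a).1 hfa
  obtain ⟨c, hc⟩ := IsCyclic.exists_pow_eq_of_pow_eq_one
    (card_units_eq_of_card_eq_sq hcard) haq
  refine ⟨c, ?_⟩
  rw [RingEquiv.apply_eq_pow_of_card_eq_sq hcard hinv hne hfix, ← pow_succ,
    ← Units.val_pow_eq_pow_val, hc, Units.val_mk0]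

theorem RingEquiv.exists_apply_mul_eq_self_of_apply_mul_self_eq_one (c : F) (hc : ε c * c = 1) :
    ∃ μ ≠ 0, ε μ * c = μ := by
  have hq := one_le_of_card_eq_sq hcard
  have hc0 : c ≠ 0 := right_ne_zero_of_mul_eq_one hc
  have hcq : (Units.mk0 c hc0)⁻¹ ^ (q + 1) = 1 := by
    refine Units.ext ?_
    rw [inv_pow, Units.val_inv_eq_inv_val, Units.val_pow_eq_pow_val, Units.val_mk0, pow_succ,
      ← RingEquiv.apply_eq_pow_of_card_eq_sq hcard hinv hne hfix, hc, inv_one, Units.val_one]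
  obtain ⟨μ, hμ⟩ := IsCyclic.exists_pow_eq_of_pow_eq_one
    (by rw [card_units_eq_of_card_eq_sq hcard, mul_comm]) hcq
  refine ⟨μ, μ.ne_zero, ?_⟩
  have hμc : (μ : F) ^ (q - 1) * c = 1 := by
    rw [← Units.val_pow_eq_pow_val, hμ, Units.val_inv_eq_inv_val, Units.val_mk0,
      inv_mul_cancel₀ hc0]
  rw [RingEquiv.apply_eq_pow_of_card_eq_sq hcard hinv hne hfix, ← Nat.sub_add_cancel hq, pow_succ',
    mul_assoc, hμc, mul_one]

end FiniteField

theorem star_conj_mul_conj_eq_one {M : Type*} [Monoid M] [StarMul M] {u v a J : M}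
    (hvu : v * u = 1) (hJ : star v * J * v = 1) (ha : star a * J * a = J) :
    star (u * a * v) * (u * a * v) = 1 := by
  have hJu : star u * u = J := by
    calc star u * u = star u * (star v * J * v) * u := by rw [hJ, mul_one]
      _ = star (v * u) * J * (v * u) := by simp only [star_mul, mul_assoc]
      _ = J := by rw [hvu, star_one, one_mul, mul_one]
  calc star (u * a * v) * (u * a * v) = star v * (star a * (star u * u) * a) * v := by
        simp only [star_mul, mul_assoc]
    _ = 1 := by rw [hJu, ha, hJ]

theorem Commute.of_star_mul_mul_eq {M : Type*} [Monoid M] [StarMul M] [IsDedekindFiniteMonoid M]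
    {a x : M} {u : Mˣ} (hu : star a * u * a = u) (hx : star a * x * a = x) :
    Commute a (↑u⁻¹ * x) := by
  have hleft : (↑u⁻¹ * star a * u) * a = 1 := by
    rw [mul_assoc (↑u⁻¹ * star a), mul_assoc, ← mul_assoc (star a), hu, Units.inv_mul]
  have hright : a * ↑u⁻¹ * star a = ↑u⁻¹ := by
    calc a * ↑u⁻¹ * star a = a * (↑u⁻¹ * star a * u) * ↑u⁻¹ := by simp [mul_assoc]
      _ = ↑u⁻¹ := by rw [mul_eq_one_comm.1 hleft, one_mul]
  calc a * (↑u⁻¹ * x) = a * (↑u⁻¹ * (star a * x * a)) := by rw [hx]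
    _ = a * ↑u⁻¹ * star a * x * a := by simp only [mul_assoc]
    _ = ↑u⁻¹ * x * a := by rw [hright]

open Matrix

theorem Matrix.mem_range_scalar_of_commute_of_adjoin_eq_top {K n : Type*} [CommSemiring K] [Fintype n]
    [DecidableEq n] {S : Set (Matrix n n K)} (hS : Algebra.adjoin K S = ⊤) {R : Matrix n n K}
    (hR : ∀ A ∈ S, Commute A R) : R ∈ Set.range (scalar n) := by
  have hRS : R ∈ Subalgebra.centralizer K S := fun A hA => (hR A hA).eq
  refine mem_range_scalar_of_commute_single fun i j _ => ?_
  have hij : single i j 1 ∈ Algebra.adjoin K S := hS ▸ Algebra.mem_top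
  exact (Algebra.adjoin_le_centralizer_centralizer K S hij R hRS).symm

theorem Matrix.fromBlocks_conjTranspose_mul_mul_eq_fromBlocks_schur {α m n : Type*} [Ring α]
    [StarRing α] [Fintype m] [Fintype n] [DecidableEq m] [DecidableEq n] (B : Matrix m n α)
    (D : Matrix n n α) :
    (fromBlocks 1 (-B) 0 1)ᴴ * fromBlocks 1 B Bᴴ D * fromBlocks 1 (-B) 0 1 =
      fromBlocks 1 0 0 (D - Bᴴ * B) := by
  simp [fromBlocks_conjTranspose, fromBlocks_multiply, neg_add_eq_sub]

section Congruence

variable {α : Type*} [Semiring α] [StarRing α] {ι κ : Type*} [Fintype ι] [DecidableEq ι]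
  [Fintype κ] [DecidableEq κ]

def Matrix.IsCongrOne (J : Matrix ι ι α) : Prop := ∃ C : Matrix ι ι α, Cᴴ * J * C = 1

theorem Matrix.IsCongrOne.of_conj {J : Matrix ι ι α} (T : Matrix ι ι α)
    (h : (Tᴴ * J * T).IsCongrOne) : J.IsCongrOne := by
  obtain ⟨C, hC⟩ := h
  exact ⟨T * C, by simpa only [conjTranspose_mul, Matrix.mul_assoc] using hC⟩

theorem Matrix.IsCongrOne.of_submatrix {J : Matrix ι ι α} (e : κ ≃ ι)
    (h : (J.submatrix e e).IsCongrOne) : J.IsCongrOne := by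
  obtain ⟨C, hC⟩ := h
  refine ⟨C.submatrix e.symm e.symm, ?_⟩
  have : J = (J.submatrix e e).submatrix e.symm e.symm := by simp
  rw [this, conjTranspose_submatrix, submatrix_mul_equiv, submatrix_mul_equiv, hC,
    submatrix_one_equiv]

theorem Matrix.IsCongrOne.fromBlocks_one {D : Matrix κ κ α} (h : D.IsCongrOne) :
    (fromBlocks (1 : Matrix ι ι α) 0 0 D).IsCongrOne := by
  obtain ⟨C, hC⟩ := h
  exact ⟨fromBlocks 1 0 0 C, by simp [fromBlocks_conjTranspose, fromBlocks_multiply, hC]⟩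

end Congruence

section Hermitian

variable {K : Type*} [Field K] [StarRing K] {ι : Type*} [Fintype ι] [DecidableEq ι]

theorem Matrix.eq_zero_of_forall_star_dotProduct_mulVec_self_eq_zero {c : K} (hc : star c ≠ c)
    {J : Matrix ι ι K} (h : ∀ v, star v ⬝ᵥ J *ᵥ v = 0) : J = 0 := by
  have hpolar : ∀ x y, star x ⬝ᵥ J *ᵥ y + star y ⬝ᵥ J *ᵥ x = 0 := fun x y => by
    have hxy := h (x + y)
    simp only [star_add, mulVec_add, add_dotProduct, dotProduct_add, h x, h y] at hxy
    linear_combination hxy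
  ext i j
  have h1 := hpolar (Pi.single i 1) (c • Pi.single j 1)
  have h2 := hpolar (Pi.single i 1) (Pi.single j 1)
  simp only [Pi.star_single, star_one, star_smul, mulVec_smul, mulVec_single_one,
    smul_dotProduct, dotProduct_smul, single_dotProduct, col_apply, one_mul, smul_eq_mul] at h1 h2
  have h3 : (c - star c) * J i j = 0 := by linear_combination h1 - star c * h2
  simpa [sub_eq_zero, Ne.symm hc] using h3

theorem Matrix.IsHermitian.exists_conjTranspose_mul_mul_apply_self_eq_one {c : K}
    (hc : star c ≠ c) (hnorm : ∀ a : K, a ≠ 0 → star a = a → ∃ b, star b * b = a)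
    {J : Matrix ι ι K} (hJ : J.IsHermitian) (hJ0 : J ≠ 0) :
    ∃ T : Matrix ι ι K, IsUnit T.det ∧ ∃ i, (Tᴴ * J * T) i i = 1 := by
  obtain ⟨v, hv⟩ : ∃ v, star v ⬝ᵥ J *ᵥ v ≠ 0 := by
    by_contra! h
    exact hJ0 (eq_zero_of_forall_star_dotProduct_mulVec_self_eq_zero hc h)
  obtain ⟨i, hi⟩ : ∃ i, v i ≠ 0 := Function.ne_iff.1 (show v ≠ 0 by rintro rfl; simp at hv)
  set T := (1 : Matrix ι ι K).updateCol i v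
  have hTi : (Tᴴ * J * T) i i = star v ⬝ᵥ J *ᵥ v := by
    rw [mul_mul_apply]
    congr <;> ext k <;> simp [T]
  obtain ⟨b, hb⟩ := hnorm _ (hTi ▸ hv) (hTi ▸ (isHermitian_conjTranspose_mul_mul T hJ).apply i i)
  have hb0 : b ≠ 0 := by rintro rfl; exact hv (by rw [← hTi, ← hb, mul_zero])
  refine ⟨b⁻¹ • T, ?_, i, ?_⟩
  · have hT : T.det = v i := by rw [← cramer_apply, cramer_one]; rfl
    simp [hT, hb0, hi]
  · have hscale : (b⁻¹ • T)ᴴ * J * (b⁻¹ • T) = (star b⁻¹ * b⁻¹) • (Tᴴ * J * T) := by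
      simp only [conjTranspose_smul, Matrix.smul_mul, Matrix.mul_smul, smul_smul, mul_comm]
    rw [hscale, smul_apply, ← hb, star_inv₀, smul_eq_mul]
    field_simp [star_ne_zero.2 hb0]

theorem Matrix.isCongrOne_of_toBlocks₁₁_eq_one {m n : Type*} [Fintype m] [Fintype n]
    [DecidableEq m] [DecidableEq n] {M : Matrix (m ⊕ n) (m ⊕ n) K} (hM : M.IsHermitian)
    (hdet : IsUnit M.det) (h₁₁ : M.toBlocks₁₁ = 1)
    (hS : ∀ S : Matrix n n K, S.IsHermitian → IsUnit S.det → S.IsCongrOne) : M.IsCongrOne := by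
  set B := M.toBlocks₁₂
  set L : Matrix (m ⊕ n) (m ⊕ n) K := fromBlocks 1 (-B) 0 1
  have h₂₁ : M.toBlocks₂₁ = Bᴴ := by
    rw [← fromBlocks_toBlocks M, isHermitian_fromBlocks_iff] at hM
    exact hM.2.1.symm
  have hMB : M = fromBlocks 1 B Bᴴ M.toBlocks₂₂ := by rw [← h₁₁, ← h₂₁, fromBlocks_toBlocks]
  have hL : Lᴴ * M * L = fromBlocks 1 0 0 (M.toBlocks₂₂ - Bᴴ * B) := by
    rw [hMB]
    exact fromBlocks_conjTranspose_mul_mul_eq_fromBlocks_schur B _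
  refine .of_conj L (hL ▸ IsCongrOne.fromBlocks_one (hS _ ?_ ?_))
  · have hLML := isHermitian_conjTranspose_mul_mul L hM
    rw [hL] at hLML
    exact (isHermitian_fromBlocks_iff.1 hLML).2.2.2
  · have hdetL : L.det = 1 := by simp [L]
    have hdetS := congrArg det hL
    rw [det_mul, det_mul, det_conjTranspose, hdetL, star_one, one_mul, mul_one,
      det_fromBlocks_zero₂₁, det_one, one_mul] at hdetS
    exact hdetS ▸ hdet

theorem Matrix.IsHermitian.isCongrOne {c : K} (hc : star c ≠ c)
    (hnorm : ∀ a : K, a ≠ 0 → star a = a → ∃ b, star b * b = a)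
    {J : Matrix ι ι K} (hJ : J.IsHermitian) (hdet : IsUnit J.det) : J.IsCongrOne := by
  induction hn : Fintype.card ι generalizing ι with
  | zero =>
    have : IsEmpty ι := Fintype.card_eq_zero_iff.1 hn
    exact ⟨1, Subsingleton.elim _ _⟩
  | succ n ih =>
    have : Nonempty ι := Fintype.card_pos_iff.1 (by omega)
    have hJ0 : J ≠ 0 := by rintro rfl; simp at hdet
    obtain ⟨T, hT, i, hTi⟩ := hJ.exists_conjTranspose_mul_mul_apply_self_eq_one hc hnorm hJ0
    let e := Equiv.sumCompl (· = i)
    refine .of_conj T <| .of_submatrix e <| isCongrOne_of_toBlocks₁₁_eq_one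
      ((isHermitian_conjTranspose_mul_mul T hJ).submatrix e) ?_ ?_ fun S hS hSdet => ih hS hSdet ?_
    · rw [det_submatrix_equiv_self, det_mul, det_mul, det_conjTranspose]
      exact (hT.star.mul hdet).mul hT
    · ext ⟨a, rfl⟩ ⟨b, rfl⟩
      simp [e, toBlocks₁₁, hTi]
    · rw [Fintype.card_subtype_compl, Fintype.card_subtype_eq, hn, Nat.add_sub_cancel]

end Hermitian

theorem Matrix.exists_eq_smul_of_forall_conjTranspose_mul_mul_eq {K n : Type*} [Field K]
    [StarRing K] [Fintype n] [DecidableEq n] {S : Set (Matrix n n K)}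
    (hS : Algebra.adjoin K S = ⊤) {Q₁ : (Matrix n n K)ˣ} {Q₂ : Matrix n n K}
    (h₁ : ∀ A ∈ S, Aᴴ * Q₁ * A = Q₁) (h₂ : ∀ A ∈ S, Aᴴ * Q₂ * A = Q₂) : ∃ c : K, Q₂ = c • Q₁ := by
  obtain ⟨c, hc⟩ := mem_range_scalar_of_commute_of_adjoin_eq_top hS
    fun A hA => Commute.of_star_mul_mul_eq (h₁ A hA) (h₂ A hA)
  refine ⟨c, ?_⟩
  rw [← Units.mul_inv_cancel_left Q₁ Q₂, ← hc, scalar_apply, ← smul_one_eq_diagonal]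
  simp

theorem Matrix.exists_isHermitian_smul_of_forall_conjTranspose_mul_mul_eq {K n : Type*} [Field K]
    [StarRing K] [Fintype n] [DecidableEq n] [Nonempty n]
    (h90 : ∀ c : K, star c * c = 1 → ∃ μ ≠ 0, star μ * c = μ) {S : Set (Matrix n n K)}
    (hS : Algebra.adjoin K S = ⊤) {Q : (Matrix n n K)ˣ} (hQ : ∀ A ∈ S, Aᴴ * Q * A = Q) :
    ∃ μ : K, μ ≠ 0 ∧ (μ • (Q : Matrix n n K)).IsHermitian := by
  obtain ⟨c, hc⟩ := exists_eq_smul_of_forall_conjTranspose_mul_mul_eq hS hQ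
    (Q₂ := (Q : Matrix n n K)ᴴ) fun A hA => by
      simpa [Matrix.mul_assoc] using congrArg conjTranspose (hQ A hA)
  have hcc : star c * c = 1 := by
    have hQQ : (1 : K) • (Q : Matrix n n K) = (star c * c) • Q := by
      conv_lhs => rw [one_smul, ← conjTranspose_conjTranspose (Q : Matrix n n K), hc]
      rw [conjTranspose_smul, hc, smul_smul]
    exact (smul_left_injective K Q.ne_zero hQQ).symm
  obtain ⟨μ, hμ0, hμ⟩ := h90 c hcc
  exact ⟨μ, hμ0, by rw [IsHermitian, conjTranspose_smul, hc, smul_smul, hμ]⟩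

theorem Matrix.exists_unitary_conj_of_forall_conjTranspose_mul_mul_eq {K n : Type*} [Field K]
    [StarRing K] [Fintype n] [DecidableEq n] {c : K} (hc : star c ≠ c)
    (hnorm : ∀ a : K, a ≠ 0 → star a = a → ∃ b, star b * b = a)
    (h90 : ∀ c : K, star c * c = 1 → ∃ μ ≠ 0, star μ * c = μ) {S : Set (Matrix n n K)}
    (hS : Algebra.adjoin K S = ⊤) {Q : (Matrix n n K)ˣ} (hQ : ∀ A ∈ S, Aᴴ * Q * A = Q) :
    ∃ P : (Matrix n n K)ˣ, ∀ A ∈ S,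
      star ((P : Matrix n n K) * A * (P⁻¹ : (Matrix n n K)ˣ)) *
        ((P : Matrix n n K) * A * (P⁻¹ : (Matrix n n K)ˣ)) = 1 := by
  cases isEmpty_or_nonempty n
  · exact ⟨1, fun _ _ => Subsingleton.elim _ _⟩
  obtain ⟨μ, hμ0, hJ⟩ := exists_isHermitian_smul_of_forall_conjTranspose_mul_mul_eq h90 hS hQ
  obtain ⟨C, hC⟩ := hJ.isCongrOne hc hnorm <| by
    rw [det_smul]
    exact (hμ0.isUnit.pow _).mul ((isUnit_iff_isUnit_det _).1 Q.isUnit)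
  have hCu := IsUnit.of_mul_eq_one_right _ hC
  refine ⟨hCu.unit⁻¹, fun A hA => star_conj_mul_conj_eq_one (v := C) ?_ hC ?_⟩
  · exact hCu.mul_val_inv
  · rw [star_eq_conjTranspose, Matrix.mul_smul, Matrix.smul_mul, hQ A hA]

abbrev starRingOfInvolutive {R : Type*} [CommRing R] (ε : R ≃+* R) (hε : Function.Involutive ε) :
    StarRing R where
  star := ε
  star_involutive := hε
  star_mul x y := by rw [map_mul, mul_comm]
  star_add := map_add ε

theorem stmt_4_general {F : Type*} [Field F] [Fintype F] {q : ℕ} (hcard : Fintype.card F = q ^ 2)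
    (ε : F ≃+* F) (hinv : Function.Involutive ε) (hne : ε ≠ RingEquiv.refl F)
    (hfix : ∀ x : F, ε x = x ↔ x ^ q = x)
    {G : Type*} [Group G] {N : ℕ} (ρ : G →* GL (Fin N) F)
    (hirr : Algebra.adjoin F
      {M : Matrix (Fin N) (Fin N) F | ∃ g : G, (ρ g : Matrix (Fin N) (Fin N) F) = M} = ⊤)
    (hdual : ∃ Q : GL (Fin N) F, ∀ g : G,
      ((Q * ρ g * Q⁻¹ : GL (Fin N) F) : Matrix (Fin N) (Fin N) F) =
        (((ρ g⁻¹ : GL (Fin N) F) : Matrix (Fin N) (Fin N) F).transpose).map ε) :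
    ∃ P : GL (Fin N) F, ∀ g : G,
      ((((P * ρ g * P⁻¹ : GL (Fin N) F) : Matrix (Fin N) (Fin N) F).map ε).transpose) *
        ((P * ρ g * P⁻¹ : GL (Fin N) F) : Matrix (Fin N) (Fin N) F) = 1 := by
  -- With `star := ε`, the matrix `(A.map ε)ᵀ` is `Aᴴ` by definition.
  let := starRingOfInvolutive ε hinv
  obtain ⟨Q, hQ⟩ := hdual
  have hform : ∀ A ∈ {M | ∃ g : G, (ρ g : Matrix (Fin N) (Fin N) F) = M}, Aᴴ * Q * A = Q := by
    rintro _ ⟨g, rfl⟩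
    have hQg : ((Q * ρ g⁻¹ * Q⁻¹ : GL (Fin N) F) : Matrix (Fin N) (Fin N) F) = (ρ g)ᴴ :=
      (hQ g⁻¹).trans (by rw [inv_inv]; rfl)
    rw [← hQg, ← Units.val_mul, ← Units.val_mul]
    simp
  obtain ⟨c, hc⟩ : ∃ c : F, star c ≠ c := by
    by_contra! h
    exact hne (RingEquiv.ext h)
  obtain ⟨P, hP⟩ := exists_unitary_conj_of_forall_conjTranspose_mul_mul_eq hc
    (RingEquiv.exists_apply_mul_self_eq_of_card_eq_sq hcard hinv hne hfix)
    (RingEquiv.exists_apply_mul_eq_self_of_apply_mul_self_eq_one hcard hinv hne hfix) hirr hform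
  refine ⟨P, fun g => ?_⟩
  rw [Units.val_mul, Units.val_mul]
  exact hP _ ⟨g, rfl⟩

/-- Let `G` be a group and `ρ : G → GL_N(F_{q²})` an absolutely irreducible
representation (expressed via Burnside's criterion: the image spans the full matrix algebra)
such that `ε ∘ ρ*` is isomorphic to `ρ`, where `ρ*(g) = ᵗρ(g⁻¹)` is the contragredient and
`ε` is the order-2 automorphism of `F_{q²}` over `F_q` applied entrywise. Then there is
`P ∈ GL_N(F_{q²})` with `P ρ(g) P⁻¹ ∈ GU_N(q)` for all `g ∈ G`, where `GU_N(q)` is taken with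
respect to the standard hermitian form (all nondegenerate hermitian forms being equivalent). -/
theorem stmt_4 {F : Type*} [Field F] [Fintype F] {q : ℕ} (hcard : Fintype.card F = q ^ 2)
    (ε : F ≃+* F) (hinv : Function.Involutive ε) (hne : ε ≠ RingEquiv.refl F)
    (hfix : ∀ x : F, ε x = x ↔ x ^ q = x)
    {G : Type*} [Group G] {N : ℕ} (hN : 0 < N) (ρ : G →* GL (Fin N) F)
    (hirr : Algebra.adjoin F
      {M : Matrix (Fin N) (Fin N) F | ∃ g : G, (ρ g : Matrix (Fin N) (Fin N) F) = M} = ⊤)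
    (hdual : ∃ Q : GL (Fin N) F, ∀ g : G,
      ((Q * ρ g * Q⁻¹ : GL (Fin N) F) : Matrix (Fin N) (Fin N) F) =
        (((ρ g⁻¹ : GL (Fin N) F) : Matrix (Fin N) (Fin N) F).transpose).map ε) :
    ∃ P : GL (Fin N) F, ∀ g : G,
      ((((P * ρ g * P⁻¹ : GL (Fin N) F) : Matrix (Fin N) (Fin N) F).map ε).transpose) *
        ((P * ρ g * P⁻¹ : GL (Fin N) F) : Matrix (Fin N) (Fin N) F) = 1 :=
  stmt_4_general hcard ε hinv hne hfix ρ hirr hdual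
end

section
/- For a group G ≤ A ⋊ S_N realized as monomial matrices in GL_N(F_q) (A a subgroup of diagonal matrices, S_N the permutation matrices), every transvection g ∈ G projects to a transposition in S_N. Consequently the number of transvections in A ⋊ S_N is at most (q−1)·N(N−1)/2. -/
open Matrix Equiv in
/-- Key structural lemma: a monomial transvection has permutation part a swap `a < b`, and
its entries are completely determined by `(a, b, M b a)`. -/
lemma stmt9_key {F : Type*} [Field F] {N : ℕ} (M : Matrix (Fin N) (Fin N) F)
    (σ : Equiv.Perm (Fin N)) (d : Fin N → Fˣ)
    (hM : ∀ i j, M i j = if i = σ j then (d j : F) else 0)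
    (φ v : Fin N → F) (hφ : φ ≠ 0) (hv : v ≠ 0) (hdot : φ ⬝ᵥ v = 0)
    (hM2 : M = 1 + Matrix.vecMulVec v φ) :
    ∃ a b : Fin N, a < b ∧ σ = Equiv.swap a b ∧ M b a ≠ 0 ∧
      ∀ i j, M i j = if i = b ∧ j = a then M b a
        else if i = a ∧ j = b then (M b a)⁻¹
        else if i = j ∧ i ≠ a ∧ i ≠ b then 1 else 0 := by
  classical
  have entry : ∀ i j, M i j = (if i = j then 1 else 0) + v i * φ j := by
    intro i j
    rw [hM2]
    simp [Matrix.add_apply, Matrix.one_apply, Matrix.vecMulVec_apply]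
  have moved : ∀ j, σ j ≠ j → v j * φ j = -1 := by
    intro j h
    have h1 : M j j = 0 := by rw [hM j j, if_neg (fun e => h e.symm)]
    have h2 := entry j j
    rw [h1, if_pos rfl] at h2
    linear_combination -h2
  -- σ is not the identity
  have hex : ∃ j, σ j ≠ j := by
    by_contra h
    push_neg at h
    have off : ∀ i j : Fin N, i ≠ j → v i * φ j = 0 := by
      intro i j hij
      have h1 : M i j = 0 := by rw [hM i j, h j, if_neg hij]
      have h2 := entry i j
      rw [h1, if_neg hij] at h2
      linear_combination -h2
    obtain ⟨i, hi⟩ := Function.ne_iff.1 hv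
    simp only [Pi.zero_apply] at hi
    have hφi : φ i ≠ 0 := by
      obtain ⟨j, hj⟩ := Function.ne_iff.1 hφ
      simp only [Pi.zero_apply] at hj
      rcases eq_or_ne i j with rfl | hij
      · exact hj
      · exact absurd ((mul_eq_zero.1 (off i j hij)).resolve_left hi) hj
    have hvk : ∀ k, k ≠ i → v k = 0 := by
      intro k hk
      exact (mul_eq_zero.1 (off k i hk)).resolve_right hφi
    have : φ ⬝ᵥ v = φ i * v i := by
      rw [dotProduct]
      exact Finset.sum_eq_single i (fun k _ hk => by rw [hvk k hk, mul_zero])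
        (fun h => absurd (Finset.mem_univ i) h)
    rw [hdot] at this
    exact hi (by
      rcases mul_eq_zero.1 this.symm with h | h
      · exact absurd h hφi
      · exact h)
  obtain ⟨a, ha⟩ := hex
  set b := σ a with hb
  have hab : a ≠ b := by
    intro e
    apply ha
    rw [hb] at e
    exact e.symm
  have hbmoved : σ b ≠ b := fun h => hab (σ.injective (hb.symm.trans h.symm))
  have hva : v a * φ a = -1 := moved a ha
  have hvb : v b * φ b = -1 := moved b hbmoved
  have hva0 : v a ≠ 0 := left_ne_zero_of_mul (hva ▸ (neg_ne_zero.2 one_ne_zero))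
  have hφa0 : φ a ≠ 0 := right_ne_zero_of_mul (hva ▸ (neg_ne_zero.2 one_ne_zero))
  have hvb0 : v b ≠ 0 := left_ne_zero_of_mul (hvb ▸ (neg_ne_zero.2 one_ne_zero))
  have hφb0 : φ b ≠ 0 := right_ne_zero_of_mul (hvb ▸ (neg_ne_zero.2 one_ne_zero))
  have F1 : ∀ i, i ≠ a → i ≠ b → v i = 0 := by
    intro i hia hib
    have h1 : M i a = 0 := by rw [hM i a, if_neg (by rw [← hb]; exact hib)]
    have h2 := entry i a
    rw [h1, if_neg hia] at h2
    have : v i * φ a = 0 := by linear_combination -h2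
    exact (mul_eq_zero.1 this).resolve_right hφa0
  have Ffix : ∀ j, j ≠ a → j ≠ b → σ j = j := by
    intro j hja hjb
    by_contra h
    exact (F1 j hja hjb ▸ left_ne_zero_of_mul ((moved j h) ▸ (neg_ne_zero.2 one_ne_zero))) rfl
  have hσb : σ b = a := by
    by_contra h
    have hσbb : σ b ≠ b := hbmoved
    have := Ffix (σ b) h hσbb
    exact hσbb (σ.injective this)
  have hσeq : σ = Equiv.swap a b := by
    ext j
    rcases eq_or_ne j a with rfl | hja
    · rw [Equiv.swap_apply_left, ← hb]
    rcases eq_or_ne j b with rfl | hjb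
    · rw [Equiv.swap_apply_right, hσb]
    · rw [Equiv.swap_apply_of_ne_of_ne hja hjb, Ffix j hja hjb]
  -- entry values
  have hMba : M b a = v b * φ a := by
    have h2 := entry b a
    rwa [if_neg (Ne.symm hab), zero_add] at h2
  have hMab : M a b = v a * φ b := by
    have h2 := entry a b
    rwa [if_neg hab, zero_add] at h2
  have hMba0 : M b a ≠ 0 := hMba ▸ mul_ne_zero hvb0 hφa0
  have hMab0 : M a b ≠ 0 := hMab ▸ mul_ne_zero hva0 hφb0
  have hprod : M a b * M b a = 1 := by
    rw [hMab, hMba]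
    have : v a * φ b * (v b * φ a) = (v a * φ a) * (v b * φ b) := by ring
    rw [this, hva, hvb]; ring
  have hinv : (M b a)⁻¹ = M a b :=
    inv_eq_of_mul_eq_one_right (by rw [mul_comm]; exact hprod)
  have form : ∀ a' b' : Fin N, a' ≠ b' → M b' a' ≠ 0 → (M b' a')⁻¹ = M a' b' →
      (∀ i, i ≠ a' → i ≠ b' → v i = 0) → (∀ j, j ≠ a' → j ≠ b' → φ j = 0) →
      v a' * φ a' = -1 → v b' * φ b' = -1 →
      ∀ i j, M i j = if i = b' ∧ j = a' then M b' a'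
        else if i = a' ∧ j = b' then (M b' a')⁻¹
        else if i = j ∧ i ≠ a' ∧ i ≠ b' then 1 else 0 := by
    intro a' b' hab' hba0 hinv' Fv Fφ ha' hb' i j
    have e1 : M b' a' = v b' * φ a' := by rw [entry b' a', if_neg (Ne.symm hab'), zero_add]
    have e2 : M a' b' = v a' * φ b' := by rw [entry a' b', if_neg hab', zero_add]
    rw [entry i j, hinv', e2, e1]
    by_cases hja : j = a'
    · by_cases hib : i = b'
      · simp [hja, hib, Ne.symm hab']
      · by_cases hia : i = a'
        · simp [hja, hia, hab', hib]
          linear_combination ha'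
        · have hij : ¬ i = j := fun h => hia (h.trans hja)
          simp [hja, hib, hia, hij, Fv i hia hib]
    · by_cases hjb : j = b'
      · by_cases hia : i = a'
        · simp [hjb, hia, hab', Ne.symm hab']
        · by_cases hib : i = b'
          · simp [hjb, hib, hia, hab', Ne.symm hab']
            linear_combination hb'
          · have hij : ¬ i = j := fun h => hib (h.trans hjb)
            simp [hjb, hia, hib, hij, Fv i hia hib]
      · have hφj := Fφ j hja hjb
        by_cases hij : i = j
        · simp [hij, hφj, hja, hjb]
        · simp [hij, hφj, hja, hjb]
  have Fφ' : ∀ j, j ≠ a → j ≠ b → φ j = 0 := by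
    intro j hja hjb
    have h1 : M a j = 0 := by
      rw [hM a j, if_neg]
      rw [Ffix j hja hjb]
      exact Ne.symm hja
    have h2 := entry a j
    rw [h1, if_neg (Ne.symm hja)] at h2
    have : v a * φ j = 0 := by linear_combination -h2
    exact (mul_eq_zero.1 this).resolve_left hva0
  rcases hab.lt_or_gt with hlt | hlt
  · exact ⟨a, b, hlt, hσeq, hMba0,
      form a b hab hMba0 hinv F1 Fφ' hva hvb⟩
  · refine ⟨b, a, hlt, by rw [hσeq, Equiv.swap_comm], hMab0, ?_⟩
    have hinv2 : (M a b)⁻¹ = M b a := by rw [← hinv, inv_inv]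
    exact form b a hab.symm hMab0 hinv2 (fun i h1 h2 => F1 i h2 h1)
      (fun j h1 h2 => Fφ' j h2 h1) hvb hva

open Matrix in
/-- In `GL_N(F_q)`, every monomial matrix (an element of `A ⋊ S_N`, `A`
diagonal, `S_N` the permutation matrices) which is a transvection projects to a
transposition in `S_N`; consequently the number of transvections among the monomial
matrices is at most `(q−1)·N(N−1)/2`. -/
theorem stmt_9 {F : Type*} [Field F] [Fintype F] {N : ℕ} (hN : 2 ≤ N) :
    (∀ (M : Matrix (Fin N) (Fin N) F) (σ : Equiv.Perm (Fin N)) (d : Fin N → Fˣ),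
      (∀ i j, M i j = if i = σ j then (d j : F) else 0) →
      (∃ φ v : Fin N → F, φ ≠ 0 ∧ v ≠ 0 ∧ φ ⬝ᵥ v = 0 ∧ M = 1 + Matrix.vecMulVec v φ) →
      σ.IsSwap) ∧
    Nat.card {M : Matrix (Fin N) (Fin N) F //
        (∃ (σ : Equiv.Perm (Fin N)) (d : Fin N → Fˣ),
          ∀ i j, M i j = if i = σ j then (d j : F) else 0) ∧
        ∃ φ v : Fin N → F, φ ≠ 0 ∧ v ≠ 0 ∧ φ ⬝ᵥ v = 0 ∧ M = 1 + Matrix.vecMulVec v φ}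
      ≤ (Fintype.card F - 1) * (N * (N - 1) / 2) := by
  classical
  constructor
  · rintro M σ d hM ⟨φ, v, hφ, hv, hdot, hM2⟩
    obtain ⟨a, b, hab, hσ, -, -⟩ := stmt9_key M σ d hM φ v hφ hv hdot hM2
    exact ⟨a, b, hab.ne, hσ⟩
  · set S := {M : Matrix (Fin N) (Fin N) F //
        (∃ (σ : Equiv.Perm (Fin N)) (d : Fin N → Fˣ),
          ∀ i j, M i j = if i = σ j then (d j : F) else 0) ∧
        ∃ φ v : Fin N → F, φ ≠ 0 ∧ v ≠ 0 ∧ φ ⬝ᵥ v = 0 ∧ M = 1 + Matrix.vecMulVec v φ}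
      with hS
    have H : ∀ x : S, ∃ p : {s : Sym2 (Fin N) // ¬ s.IsDiag} × {c : F // c ≠ 0},
        ∃ a b : Fin N, a < b ∧ p.1.1 = s(a, b) ∧ (p.2 : F) = x.1 b a ∧
        ∀ i j, x.1 i j = if i = b ∧ j = a then x.1 b a
          else if i = a ∧ j = b then (x.1 b a)⁻¹
          else if i = j ∧ i ≠ a ∧ i ≠ b then 1 else 0 := by
      rintro ⟨M, ⟨σ, d, hM⟩, φ, v, hφ, hv, hdot, hM2⟩
      obtain ⟨a, b, hab, hσ, hne, hform⟩ := stmt9_key M σ d hM φ v hφ hv hdot hM2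
      exact ⟨⟨⟨s(a, b), by simp [hab.ne]⟩, ⟨M b a, hne⟩⟩, a, b, hab, rfl, rfl, hform⟩
    choose f hf using H
    have hinj : Function.Injective f := by
      intro x y hxy
      obtain ⟨a, b, hab, hp1, hp2, hform⟩ := hf x
      obtain ⟨a', b', hab', hp1', hp2', hform'⟩ := hf y
      rw [hxy] at hp1 hp2
      rw [hp1'] at hp1
      rcases Sym2.eq_iff.1 hp1 with ⟨h1, h2⟩ | ⟨h1, h2⟩
      · rw [h1, h2] at hp2' hform'
        have hc := hp2.symm.trans hp2'
        apply Subtype.ext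
        ext i j
        rw [hform i j, hform' i j, hc]
      · rw [h1, h2] at hab'
        exact absurd hab' (not_lt.2 hab.le)
    have hle := Nat.card_le_card_of_injective f hinj
    have h1 : Nat.card {s : Sym2 (Fin N) // ¬ s.IsDiag} = N.choose 2 := by
      rw [Nat.card_eq_fintype_card, Sym2.card_subtype_not_diag, Fintype.card_fin]
    have h2 : Nat.card {c : F // c ≠ 0} = Fintype.card F - 1 := by
      rw [← Nat.card_congr unitsEquivNeZero, Nat.card_eq_fintype_card, Fintype.card_units]
    calc Nat.card S ≤ _ := hle
      _ = (Fintype.card F - 1) * (N * (N - 1) / 2) := by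
        rw [Nat.card_prod, h1, h2, Nat.choose_two_right, mul_comm]
end
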